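/- Let k ≥ 1, let T, Y ∈ M_k(ℂ) with ‖Y‖_∞ ≤ R, let ε > 0, and let Q ∈ M_k(ℂ) be an orthogonal projection with ‖Q(T−Y)‖_∞ ≤ ε. Then the range of the spectral projection χ_{(R+ε,∞)}(|T*|) intersects the range of Q trivially: χ_{(R+ε,∞)}(|T*|)(ℂ^k) ∩ Q(ℂ^k) = {0}. Consequently, rank(1 − χ_{[0,R+ε]}(|T*|)) ≤ rank(1−Q). -/

import Mathlib

/-! For `v ≠ 0` in both ranges, `Qv = v` gives `T*v = Y*v + (Q(T - Y))*v`, hence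
`‖T*v‖ ≤ (R + ε)‖v‖`. On the other hand `‖T*v‖ = ‖Bv‖` since `B² = TT*`, and in an eigenbasis of
`B` the vector `v` only has components along eigenvalues `> R + ε`, so `‖Bv‖ > (R + ε)‖v‖`.
For the rank bound, `1 - χ_{[0,R+ε]}(B) = χ_{(R+ε,∞)}(B)` because `B ≥ 0`, and `1 - Q` is injective
on its range since `ker (1 - Q) = range Q`. -/

open Matrix
open scoped Matrix.Norms.L2Operator ComplexOrder

/-- The spectral projection `χ_E(A)` of a Hermitian matrix `A` for a Borel set `E ⊆ ℝ`. -/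
noncomputable def specProj {k : ℕ} {A : Matrix (Fin k) (Fin k) ℂ} (hA : A.IsHermitian)
    (E : Set ℝ) : Matrix (Fin k) (Fin k) ℂ :=
  (hA.eigenvectorUnitary : Matrix (Fin k) (Fin k) ℂ) *
    Matrix.diagonal (fun i => Set.indicator E (fun _ => (1 : ℂ)) (hA.eigenvalues i)) *
    star (hA.eigenvectorUnitary : Matrix (Fin k) (Fin k) ℂ)

/-- The normalized trace on `M_k(ℂ)` (`tr(1) = 1`), real part. -/
noncomputable def normTraceR {k : ℕ} (A : Matrix (Fin k) (Fin k) ℂ) : ℝ :=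
  (A.trace).re / k

open WithLp

section EuclideanNorm

variable {𝕜 : Type*} [RCLike 𝕜] {m n : Type*} [Fintype m] [Fintype n]

lemma norm_toLp_sq (v : n → 𝕜) : ‖toLp 2 v‖ ^ 2 = RCLike.re (star v ⬝ᵥ v) := by
  rw [norm_sq_eq_re_inner (𝕜 := 𝕜), EuclideanSpace.inner_toLp_toLp, dotProduct_comm]

lemma norm_toLp_mulVec_sq (M : Matrix m n 𝕜) (v : n → 𝕜) :
    ‖toLp 2 (M *ᵥ v)‖ ^ 2 = RCLike.re (star v ⬝ᵥ (Mᴴ * M) *ᵥ v) := by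
  rw [norm_toLp_sq, star_mulVec, dotProduct_mulVec, dotProduct_mulVec, vecMul_vecMul]

lemma norm_toLp_mulVec_eq_of_conjTranspose_mul_self_eq {M N : Matrix m n 𝕜}
    (h : Mᴴ * M = Nᴴ * N) (v : n → 𝕜) : ‖toLp 2 (M *ᵥ v)‖ = ‖toLp 2 (N *ᵥ v)‖ := by
  rw [← sq_eq_sq₀ (norm_nonneg _) (norm_nonneg _), norm_toLp_mulVec_sq, norm_toLp_mulVec_sq, h]

lemma norm_toLp_mulVec_of_mem_unitary [DecidableEq n] {U : Matrix n n 𝕜}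
    (hU : U ∈ unitary (Matrix n n 𝕜)) (v : n → 𝕜) : ‖toLp 2 (U *ᵥ v)‖ = ‖toLp 2 v‖ := by
  have h : Uᴴ * U = (1 : Matrix n n 𝕜)ᴴ * 1 := by
    rw [conjTranspose_one, one_mul, ← star_eq_conjTranspose]
    exact (Unitary.mem_iff.mp hU).1
  rw [norm_toLp_mulVec_eq_of_conjTranspose_mul_self_eq h, one_mulVec]

lemma lt_norm_toLp_diagonal_mulVec [DecidableEq n] {d : n → ℝ} {r : ℝ} (hr : 0 ≤ r)
    {x : n → 𝕜} (hx : x ≠ 0) (hd : ∀ i, x i ≠ 0 → r < d i) :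
    r * ‖toLp 2 x‖ < ‖toLp 2 (diagonal (RCLike.ofReal ∘ d) *ᵥ x)‖ := by
  refine lt_of_pow_lt_pow_left₀ 2 (norm_nonneg _) ?_
  obtain ⟨i₀, hi₀⟩ := Function.ne_iff.mp hx
  simp only [mul_pow, EuclideanSpace.norm_sq_eq, mulVec_diagonal, Function.comp_apply, norm_mul,
    RCLike.norm_ofReal, sq_abs, Finset.mul_sum]
  refine Finset.sum_lt_sum (fun i _ => ?_) ⟨i₀, Finset.mem_univ _, ?_⟩
  · by_cases hi : x i = 0
    · simp [hi]
    · gcongr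
      exact (hd i hi).le
  · gcongr
    exact hd i₀ hi₀

lemma norm_toLp_conjTranspose_mulVec_le [DecidableEq n] {Q T Y : Matrix n n 𝕜}
    (hQ : Q.IsHermitian) {v : n → 𝕜} (hv : Q *ᵥ v = v) :
    ‖toLp 2 (Tᴴ *ᵥ v)‖ ≤ (‖Y‖ + ‖Q * (T - Y)‖) * ‖toLp 2 v‖ := by
  have hsplit : Tᴴ *ᵥ v = Yᴴ *ᵥ v + (Q * (T - Y))ᴴ *ᵥ v := by
    rw [conjTranspose_mul, hQ.eq, ← mulVec_mulVec, hv, conjTranspose_sub, sub_mulVec,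
      add_sub_cancel]
  calc ‖toLp 2 (Tᴴ *ᵥ v)‖ ≤ ‖toLp 2 (Yᴴ *ᵥ v)‖ + ‖toLp 2 ((Q * (T - Y))ᴴ *ᵥ v)‖ := by
        rw [hsplit, toLp_add]
        exact norm_add_le _ _
    _ ≤ ‖Yᴴ‖ * ‖toLp 2 v‖ + ‖(Q * (T - Y))ᴴ‖ * ‖toLp 2 v‖ :=
        add_le_add (l2_opNorm_mulVec _ _) (l2_opNorm_mulVec _ _)
    _ = (‖Y‖ + ‖Q * (T - Y)‖) * ‖toLp 2 v‖ := by
        rw [l2_opNorm_conjTranspose, l2_opNorm_conjTranspose, add_mul]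

end EuclideanNorm

lemma finrank_le_finrank_range_of_disjoint_ker {K V W : Type*} [Field K] [AddCommGroup V]
    [Module K V] [AddCommGroup W] [Module K W] [FiniteDimensional K W] {S : Submodule K V}
    {f : V →ₗ[K] W} (h : Disjoint S (LinearMap.ker f)) :
    Module.finrank K S ≤ Module.finrank K (LinearMap.range f) :=
  calc Module.finrank K S = Module.finrank K (LinearMap.range (f.domRestrict S)) :=
        (LinearMap.finrank_range_of_inj (LinearMap.injective_domRestrict_iff.mpr h)).symm
    _ ≤ Module.finrank K (LinearMap.range f) := by
        rw [LinearMap.range_domRestrict]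
        exact Submodule.finrank_mono LinearMap.map_le_range

lemma Matrix.rank_le_rank_one_sub_of_disjoint {K n : Type*} [Field K] [Fintype n] [DecidableEq n]
    {P Q : Matrix n n K} (hQ : IsIdempotentElem Q)
    (h : Disjoint (LinearMap.range (toLin' P)) (LinearMap.range (toLin' Q))) :
    P.rank ≤ (1 - Q).rank := by
  have hker : LinearMap.range (toLin' Q) = LinearMap.ker (toLin' (1 - Q)) := by
    rw [map_sub, toLin'_one]
    refine LinearMap.IsIdempotentElem.range_eq_ker_one_sub ?_
    rw [IsIdempotentElem, Module.End.mul_eq_comp, ← toLin'_mul, hQ]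
  rw [hker] at h
  rw [rank, rank, ← toLin'_apply', ← toLin'_apply']
  exact finrank_le_finrank_range_of_disjoint_ker h

section SpecProj

variable {k : ℕ} {A : Matrix (Fin k) (Fin k) ℂ} (hA : A.IsHermitian)

lemma star_eigenvectorUnitary_mul_specProj (E : Set ℝ) :
    star (hA.eigenvectorUnitary : Matrix (Fin k) (Fin k) ℂ) * specProj hA E =
      diagonal (fun i => E.indicator (fun _ => (1 : ℂ)) (hA.eigenvalues i)) *
        star (hA.eigenvectorUnitary : Matrix (Fin k) (Fin k) ℂ) := by
  rw [specProj, ← mul_assoc, ← mul_assoc, Unitary.coe_star_mul_self, one_mul]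

lemma eigenvalues_mem_of_mem_range_specProj {E : Set ℝ} {v : Fin k → ℂ}
    (hv : v ∈ LinearMap.range (toLin' (specProj hA E))) {i : Fin k}
    (hi : (star (hA.eigenvectorUnitary : Matrix (Fin k) (Fin k) ℂ) *ᵥ v) i ≠ 0) :
    hA.eigenvalues i ∈ E := by
  obtain ⟨w, rfl⟩ := hv
  contrapose! hi
  rw [toLin'_apply, mulVec_mulVec, star_eigenvectorUnitary_mul_specProj, ← mulVec_mulVec,
    mulVec_diagonal, Set.indicator_of_notMem hi, zero_mul]

lemma star_eigenvectorUnitary_mulVec_mulVec (v : Fin k → ℂ) :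
    star (hA.eigenvectorUnitary : Matrix (Fin k) (Fin k) ℂ) *ᵥ (A *ᵥ v) =
      diagonal (RCLike.ofReal ∘ hA.eigenvalues) *ᵥ
        (star (hA.eigenvectorUnitary : Matrix (Fin k) (Fin k) ℂ) *ᵥ v) := by
  set U : Matrix (Fin k) (Fin k) ℂ := ↑hA.eigenvectorUnitary
  have hdiag : star U * A * U = diagonal (RCLike.ofReal ∘ hA.eigenvalues) := by
    simpa [Unitary.conjStarAlgAut_apply] using hA.conjStarAlgAut_star_eigenvectorUnitary
  rw [mulVec_mulVec, mulVec_mulVec, ← hdiag, mul_assoc _ U,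
    (Unitary.mem_iff.mp hA.eigenvectorUnitary.2).2, mul_one]

lemma lt_norm_toLp_mulVec_of_mem_range_specProj_Ioi {r : ℝ} (hr : 0 ≤ r) {v : Fin k → ℂ}
    (hv : v ∈ LinearMap.range (toLin' (specProj hA (Set.Ioi r)))) (hv0 : v ≠ 0) :
    r * ‖toLp 2 v‖ < ‖toLp 2 (A *ᵥ v)‖ := by
  set U : Matrix (Fin k) (Fin k) ℂ := ↑hA.eigenvectorUnitary
  have hU : star U ∈ unitary (Matrix (Fin k) (Fin k) ℂ) :=
    Unitary.star_mem hA.eigenvectorUnitary.2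
  have hcoord : star U *ᵥ v ≠ 0 := by
    contrapose! hv0
    rw [← one_mulVec v, ← (Unitary.mem_iff.mp hA.eigenvectorUnitary.2).2, ← mulVec_mulVec, hv0,
      mulVec_zero]
  rw [← norm_toLp_mulVec_of_mem_unitary hU v, ← norm_toLp_mulVec_of_mem_unitary hU (A *ᵥ v),
    star_eigenvectorUnitary_mulVec_mulVec]
  exact lt_norm_toLp_diagonal_mulVec hr hcoord fun i hi =>
    eigenvalues_mem_of_mem_range_specProj hA hv hi

lemma specProj_congr {E F : Set ℝ} (h : ∀ i, hA.eigenvalues i ∈ E ↔ hA.eigenvalues i ∈ F) :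
    specProj hA E = specProj hA F := by
  unfold specProj
  congr 3
  ext i
  by_cases hE : hA.eigenvalues i ∈ E
  · rw [Set.indicator_of_mem hE, Set.indicator_of_mem ((h i).mp hE)]
  · rw [Set.indicator_of_notMem hE, Set.indicator_of_notMem (mt (h i).mpr hE)]

lemma specProj_compl (E : Set ℝ) : specProj hA Eᶜ = 1 - specProj hA E := by
  have hdiag : diagonal (fun i => Eᶜ.indicator (fun _ => (1 : ℂ)) (hA.eigenvalues i)) =
      1 - diagonal (fun i => E.indicator (fun _ => (1 : ℂ)) (hA.eigenvalues i)) := by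
    rw [← diagonal_one, diagonal_sub]
    congr 1
    ext i
    by_cases h : hA.eigenvalues i ∈ E <;> simp [h]
  rw [specProj, hdiag, mul_sub, sub_mul, mul_one, (Unitary.mem_iff.mp hA.eigenvectorUnitary.2).2,
    specProj]

end SpecProj

theorem stmt12_general (k : ℕ) (T Y : Matrix (Fin k) (Fin k) ℂ) (R ε : ℝ)
    (hY : ‖Y‖ ≤ R)
    (Q : Matrix (Fin k) (Fin k) ℂ) (hQher : Q.IsHermitian) (hQidem : Q * Q = Q)
    (hQT : ‖Q * (T - Y)‖ ≤ ε)
    (B : Matrix (Fin k) (Fin k) ℂ) (hB : B.PosSemidef) (hBsq : B * B = T * Tᴴ) :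
    LinearMap.range (Matrix.toLin' (specProj hB.isHermitian (Set.Ioi (R + ε)))) ⊓
        LinearMap.range (Matrix.toLin' Q) = ⊥ ∧
      (1 - specProj hB.isHermitian (Set.Icc 0 (R + ε))).rank ≤ (1 - Q).rank := by
  have hRε : 0 ≤ R + ε := add_nonneg ((norm_nonneg Y).trans hY) ((norm_nonneg _).trans hQT)
  have hdisj : LinearMap.range (toLin' (specProj hB.isHermitian (Set.Ioi (R + ε)))) ⊓
      LinearMap.range (toLin' Q) = ⊥ := by
    refine eq_bot_iff.mpr fun v ⟨hvP, hvQ⟩ => (Submodule.mem_bot ℂ).mpr (by_contra fun hv0 => ?_)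
    have hQv : Q *ᵥ v = v := by
      obtain ⟨w, rfl⟩ := hvQ
      rw [toLin'_apply, mulVec_mulVec, hQidem]
    refine lt_irrefl ((R + ε) * ‖toLp 2 v‖) ?_
    calc (R + ε) * ‖toLp 2 v‖ < ‖toLp 2 (B *ᵥ v)‖ :=
          lt_norm_toLp_mulVec_of_mem_range_specProj_Ioi hB.isHermitian hRε hvP hv0
      _ = ‖toLp 2 (Tᴴ *ᵥ v)‖ := norm_toLp_mulVec_eq_of_conjTranspose_mul_self_eq
          (by rw [hB.isHermitian.eq, hBsq, conjTranspose_conjTranspose]) v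
      _ ≤ (‖Y‖ + ‖Q * (T - Y)‖) * ‖toLp 2 v‖ := norm_toLp_conjTranspose_mulVec_le hQher hQv
      _ ≤ (R + ε) * ‖toLp 2 v‖ := by gcongr
  refine ⟨hdisj, ?_⟩
  have hcompl : 1 - specProj hB.isHermitian (Set.Icc 0 (R + ε)) =
      specProj hB.isHermitian (Set.Ioi (R + ε)) := by
    rw [← specProj_compl]
    exact specProj_congr _ fun i => by simp [hB.eigenvalues_nonneg i]
  rw [hcompl]
  exact rank_le_rank_one_sub_of_disjoint hQidem (disjoint_iff.mpr hdisj)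

/-- If `‖Y‖_∞ ≤ R` and `Q` is a projection with `‖Q(T−Y)‖_∞ ≤ ε`, then the range of
`χ_{(R+ε,∞)}(|T^*|)` meets the range of `Q` trivially, and
`rank(1 − χ_{[0,R+ε]}(|T^*|)) ≤ rank(1−Q)`. -/
theorem stmt12 (k : ℕ) (hk : 1 ≤ k) (T Y : Matrix (Fin k) (Fin k) ℂ) (R ε : ℝ)
    (hY : ‖Y‖ ≤ R) (hε : 0 < ε)
    (Q : Matrix (Fin k) (Fin k) ℂ) (hQher : Q.IsHermitian) (hQidem : Q * Q = Q)
    (hQT : ‖Q * (T - Y)‖ ≤ ε)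
    (B : Matrix (Fin k) (Fin k) ℂ) (hB : B.PosSemidef) (hBsq : B * B = T * Tᴴ) :
    LinearMap.range (Matrix.toLin' (specProj hB.isHermitian (Set.Ioi (R + ε)))) ⊓
        LinearMap.range (Matrix.toLin' Q) = ⊥ ∧
      (1 - specProj hB.isHermitian (Set.Icc 0 (R + ε))).rank ≤ (1 - Q).rank :=
  stmt12_general k T Y R ε hY Q hQher hQidem hQT B hB hBsq
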